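/- Let n ≥ 1. For all Λ ≥ 0, c ≥ 0 and ε > 0 there exists r₀ > 0, depending only on Λ, c and ε, with the following property: for every S ∈ (0, r₀] and every twice differentiable y : [0, S] → ℝⁿ (with the Euclidean inner product) satisfying ‖y''(s)‖ ≤ Λ ‖y(s)‖ for all s, ‖y(0)‖ = 1, and ‖y'(0)‖ ≤ c, one has |‖y(s)‖ - 1| < ε for all s ∈ [0, S]; moreover, for every unit vector e ∈ ℝⁿ with ⟪y(0), e⟫ = 0, one has |⟪y(s), e⟫| < ε for all s ∈ [0, S]. -/

import Mathlib

/-!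
In phase space the pair `(y, y')` has derivative `(y', y'')`, whose norm is at most
`max 1 Λ` times that of `(y, y')`; Grönwall's inequality therefore bounds `y'` by a constant
depending only on `Λ` and `c` on `[0, 1]`. By the mean value theorem `y` then moves by at most
that constant times `s`, and both `‖y s‖ - 1` and `⟪y s, e⟫` are controlled by `‖y s - y 0‖`.
-/

open Set RealInnerProductSpace

section SecondOrder

variable {E : Type*} [NormedAddCommGroup E]

theorem norm_prod_le_max_one_mul {Λ : ℝ} {u v w : E} (hw : ‖w‖ ≤ Λ * ‖u‖) :
    ‖(v, w)‖ ≤ max 1 Λ * ‖(u, v)‖ := by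
  have hK : (1 : ℝ) ≤ max 1 Λ := le_max_left _ _
  rw [Prod.norm_def, Prod.norm_def]
  refine max_le ?_ ?_
  · exact (le_max_right _ _).trans (le_mul_of_one_le_left (by positivity) hK)
  · exact hw.trans (mul_le_mul (le_max_right _ _) (le_max_left _ _) (norm_nonneg _)
      (zero_le_one.trans hK))

variable [NormedSpace ℝ E] {y y' y'' : ℝ → E} {Λ S : ℝ}

theorem norm_prod_le_exp_of_norm_deriv2_le
    (hy : ∀ s ∈ Icc 0 S, HasDerivWithinAt y (y' s) (Icc 0 S) s)
    (hy' : ∀ s ∈ Icc 0 S, HasDerivWithinAt y' (y'' s) (Icc 0 S) s)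
    (hbound : ∀ s ∈ Icc 0 S, ‖y'' s‖ ≤ Λ * ‖y s‖) :
    ∀ s ∈ Icc 0 S, ‖(y s, y' s)‖ ≤ ‖(y 0, y' 0)‖ * Real.exp (max 1 Λ * s) := by
  have hz : ∀ s ∈ Icc 0 S,
      HasDerivWithinAt (fun t => (y t, y' t)) (y' s, y'' s) (Icc 0 S) s :=
    fun s hs => (hy s hs).prodMk (hy' s hs)
  intro s hs
  have h := norm_le_gronwallBound_of_norm_deriv_right_le (ε := 0)
    (fun t ht => (hz t ht).continuousWithinAt)
    (fun t ht => (hz t (Ico_subset_Icc_self ht)).mono_of_mem_nhdsWithin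
      (Icc_mem_nhdsGE_of_mem ht))
    le_rfl
    (fun t ht => by
      rw [add_zero]
      exact norm_prod_le_max_one_mul (hbound t (Ico_subset_Icc_self ht)))
    s hs
  rwa [sub_zero, gronwallBound_ε0] at h

theorem norm_sub_le_of_norm_deriv2_le
    (hy : ∀ s ∈ Icc 0 S, HasDerivWithinAt y (y' s) (Icc 0 S) s)
    (hy' : ∀ s ∈ Icc 0 S, HasDerivWithinAt y' (y'' s) (Icc 0 S) s)
    (hbound : ∀ s ∈ Icc 0 S, ‖y'' s‖ ≤ Λ * ‖y s‖) (hS : S ≤ 1) :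
    ∀ s ∈ Icc 0 S, ‖y s - y 0‖ ≤ max ‖y 0‖ ‖y' 0‖ * Real.exp (max 1 Λ) * s := by
  have hderiv : ∀ s ∈ Icc 0 S, ‖y' s‖ ≤ max ‖y 0‖ ‖y' 0‖ * Real.exp (max 1 Λ) := by
    intro s hs
    have hKs : max 1 Λ * s ≤ max 1 Λ :=
      mul_le_of_le_one_right (zero_le_one.trans (le_max_left _ _)) (hs.2.trans hS)
    calc ‖y' s‖ ≤ ‖(y s, y' s)‖ := le_max_right _ _
      _ ≤ ‖(y 0, y' 0)‖ * Real.exp (max 1 Λ * s) :=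
        norm_prod_le_exp_of_norm_deriv2_le hy hy' hbound s hs
      _ ≤ max ‖y 0‖ ‖y' 0‖ * Real.exp (max 1 Λ) := by
        rw [Prod.norm_def]
        gcongr
  intro s hs
  have h := (convex_Icc 0 S).norm_image_sub_le_of_norm_hasDerivWithin_le hy hderiv
    (left_mem_Icc.2 (hs.1.trans hs.2)) hs
  rwa [sub_zero, Real.norm_of_nonneg hs.1] at h

end SecondOrder

theorem abs_inner_le_norm_sub_of_inner_eq_zero {E : Type*} [NormedAddCommGroup E]
    [InnerProductSpace ℝ E] {u v e : E} (he : ‖e‖ = 1) (hv : ⟪v, e⟫ = 0) :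
    |⟪u, e⟫| ≤ ‖u - v‖ := by
  calc |⟪u, e⟫| = |⟪u - v, e⟫| := by rw [inner_sub_left, hv, sub_zero]
    _ ≤ ‖u - v‖ * ‖e‖ := abs_real_inner_le_norm _ _
    _ = ‖u - v‖ := by rw [he, mul_one]

theorem stmt_11_general (n : ℕ) (Λ c ε : ℝ) (hε : 0 < ε) :
    ∃ r₀ > 0, ∀ S : ℝ, 0 < S → S ≤ r₀ →
      ∀ y y' y'' : ℝ → EuclideanSpace ℝ (Fin n),
        (∀ s ∈ Icc (0 : ℝ) S, HasDerivWithinAt y (y' s) (Icc (0 : ℝ) S) s) →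
        (∀ s ∈ Icc (0 : ℝ) S, HasDerivWithinAt y' (y'' s) (Icc (0 : ℝ) S) s) →
        (∀ s ∈ Icc (0 : ℝ) S, ‖y'' s‖ ≤ Λ * ‖y s‖) →
        ‖y 0‖ = 1 → ‖y' 0‖ ≤ c →
        (∀ s ∈ Icc (0 : ℝ) S, |‖y s‖ - 1| < ε) ∧
        (∀ e : EuclideanSpace ℝ (Fin n), ‖e‖ = 1 → ⟪y 0, e⟫ = 0 →
          ∀ s ∈ Icc (0 : ℝ) S, |⟪y s, e⟫| < ε) := by
  set M := max 1 c * Real.exp (max 1 Λ)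
  have hM : 0 < M := by positivity
  refine ⟨min 1 (ε / (M + 1)), by positivity, ?_⟩
  intro S _ hSr y y' y'' hy hy' hbound hy0 hy'0
  have hclose : ∀ s ∈ Icc 0 S, ‖y s - y 0‖ < ε := by
    intro s hs
    have hsε : s ≤ ε / (M + 1) := hs.2.trans (hSr.trans (min_le_right _ _))
    calc ‖y s - y 0‖ ≤ max ‖y 0‖ ‖y' 0‖ * Real.exp (max 1 Λ) * s :=
          norm_sub_le_of_norm_deriv2_le hy hy' hbound (hSr.trans (min_le_left _ _)) s hs
      _ ≤ M * (ε / (M + 1)) := by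
        rw [hy0]
        gcongr
        · exact hs.1
        · exact mul_le_mul_of_nonneg_right (max_le_max le_rfl hy'0) (Real.exp_pos _).le
      _ < ε := by
        rw [mul_div_assoc', div_lt_iff₀ (by positivity)]
        linarith
  refine ⟨fun s hs => ?_, fun e he he0 s hs => ?_⟩
  · calc |‖y s‖ - 1| = |‖y s‖ - ‖y 0‖| := by rw [hy0]
      _ ≤ ‖y s - y 0‖ := abs_norm_sub_norm_le _ _
      _ < ε := hclose s hs
  · exact (abs_inner_le_norm_sub_of_inner_eq_zero he he0).trans_lt (hclose s hs)

theorem stmt_11 (n : ℕ) (hn : 1 ≤ n) (Λ c ε : ℝ) (hΛ : 0 ≤ Λ) (hc : 0 ≤ c) (hε : 0 < ε) :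
    ∃ r₀ > 0, ∀ S : ℝ, 0 < S → S ≤ r₀ →
      ∀ y y' y'' : ℝ → EuclideanSpace ℝ (Fin n),
        (∀ s ∈ Icc (0 : ℝ) S, HasDerivWithinAt y (y' s) (Icc (0 : ℝ) S) s) →
        (∀ s ∈ Icc (0 : ℝ) S, HasDerivWithinAt y' (y'' s) (Icc (0 : ℝ) S) s) →
        (∀ s ∈ Icc (0 : ℝ) S, ‖y'' s‖ ≤ Λ * ‖y s‖) →
        ‖y 0‖ = 1 → ‖y' 0‖ ≤ c →
        (∀ s ∈ Icc (0 : ℝ) S, |‖y s‖ - 1| < ε) ∧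
        (∀ e : EuclideanSpace ℝ (Fin n), ‖e‖ = 1 → ⟪y 0, e⟫ = 0 →
          ∀ s ∈ Icc (0 : ℝ) S, |⟪y s, e⟫| < ε) :=
  stmt_11_general n Λ c ε hε
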